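/- If the velocity coefficient arrays u¹, u⁰, u² : ℕ⁴ → ℝ satisfy the divergence recurrence u⁰_{ω,p,q+1,r} = -((p+1)/(q+1)) u¹_{ω,p+1,q,r} - ((r+1)/(q+1)) u²_{ω,p,q,r+1} for all ω,p,q,r, and all three power series converge absolutely on an open set D ⊆ ℝ⁴, then the function U = (U¹, U⁰, U²) defined by the sums of these series satisfies ∇·U = 0 on D (where the divergence is taken with respect to the spatial variables x, y, z). -/

import Mathlib

/-!
Each component is an absolutely convergent power series in `(t, x, y, z)`, so it can be
differentiated term by term: openness of `D` gives `w ∈ D` with `|w| = |v| + (δ, δ, δ, δ)`, and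
since `n ρ ^ (n - 1) = O(σ ^ n)` for `0 ≤ ρ < σ`, the absolute series at `w` dominates the
differentials of the monomials uniformly on the ball of radius `δ / 2` around `v`. After shifting
the summation index, the coefficient of `t^ω x^p y^q z^r` in `∂ₓU¹ + ∂ᵧU⁰ + ∂_zU²` is
`(p+1) u¹_{ω,p+1,q,r} + (q+1) u⁰_{ω,p,q+1,r} + (r+1) u²_{ω,p,q,r+1}`, which the recurrence makes
vanish.
-/

open Topology

@[simp] theorem Prod.fst_abs {α β : Type*} [Lattice α] [Lattice β] [AddGroup α] [AddGroup β]
    (p : α × β) : |p|.1 = |p.1| := rfl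

@[simp] theorem Prod.snd_abs {α β : Type*} [Lattice α] [Lattice β] [AddGroup α] [AddGroup β]
    (p : α × β) : |p|.2 = |p.2| := rfl

theorem hasSum_comp_add_right_iff {M α : Type*} [AddCancelCommMonoid M] [LE M] [ExistsAddOfLE M]
    [AddCommMonoid α] [TopologicalSpace α] {f : M → α} {a : α} (e : M)
    (hf : ∀ i, ¬e ≤ i → f i = 0) : HasSum (fun j => f (j + e)) a ↔ HasSum f a := by
  refine (add_left_injective e).hasSum_iff fun i hi => hf i fun hei => hi ?_
  obtain ⟨j, rfl⟩ := exists_add_of_le hei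
  exact ⟨j, add_comm j e⟩

theorem exists_abs_sub_le_abs_eq_abs_add (a : ℝ) {δ : ℝ} (hδ : 0 ≤ δ) :
    ∃ b : ℝ, |b - a| ≤ δ ∧ |b| = |a| + δ := by
  rcases le_total 0 a with ha | ha
  · exact ⟨a + δ, by simp [abs_of_nonneg hδ], by rw [abs_of_nonneg ha, abs_of_nonneg (by linarith)]⟩
  · exact ⟨a - δ, by simp [abs_of_nonneg hδ], by
      rw [abs_of_nonpos ha, abs_of_nonpos (by linarith)]; ring⟩

theorem exists_nat_mul_pow_pred_le {ρ σ : ℝ} (hρ : 0 ≤ ρ) (h : ρ < σ) :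
    ∃ C, ∀ a : ℝ, |a| ≤ ρ → ∀ n : ℕ, n * |a| ^ (n - 1) ≤ C * σ ^ n := by
  have hσ : 0 < σ := hρ.trans_lt h
  have hr₀ : 0 ≤ ρ / σ := div_nonneg hρ hσ.le
  have hr₁ : ρ / σ < 1 := (div_lt_one hσ).2 h
  obtain ⟨M, hM⟩ := (tendsto_self_mul_const_pow_of_lt_one hr₀ hr₁).bddAbove_range
  have hM₀ : 0 ≤ M := by simpa using hM ⟨0, rfl⟩
  refine ⟨(M + 1) / σ, fun a ha n => ?_⟩
  rcases n with _ | m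
  · simp only [CharP.cast_eq_zero, zero_mul, pow_zero, mul_one]; positivity
  have hm : ((m : ℝ) + 1) * (ρ / σ) ^ m ≤ M + 1 := by
    have h₁ : (m : ℝ) * (ρ / σ) ^ m ≤ M := hM ⟨m, rfl⟩
    have h₂ : (ρ / σ) ^ m ≤ 1 := pow_le_one₀ hr₀ hr₁.le
    linarith
  calc ((m + 1 : ℕ) : ℝ) * |a| ^ (m + 1 - 1) ≤ ((m : ℝ) + 1) * ρ ^ m := by
        push_cast; gcongr
    _ = ((m : ℝ) + 1) * (ρ / σ) ^ m * σ ^ m := by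
        rw [mul_assoc, div_pow, div_mul_cancel₀ _ (pow_ne_zero _ hσ.ne')]
    _ ≤ (M + 1) * σ ^ m := by gcongr
    _ = (M + 1) / σ * σ ^ (m + 1) := by field_simp; ring

namespace FourVarSeries

-- A point of `ℝ⁴` is `(t, x, y, z)`; the multi-index `i` carries the exponents in that order.
local notation "ℝ⁴" => ℝ × ℝ × ℝ × ℝ
local notation "ℕ⁴" => ℕ × ℕ × ℕ × ℕ

def monomial (c : ℝ) (i : ℕ⁴) (v : ℝ⁴) : ℝ :=
  c * v.1 ^ i.1 * v.2.1 ^ i.2.1 * v.2.2.1 ^ i.2.2.1 * v.2.2.2 ^ i.2.2.2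

noncomputable def series (c : ℕ⁴ → ℝ) (y : ℝ⁴) : ℝ :=
  ∑' i, monomial (c i) i y

theorem monomial_add (a b : ℝ) (i : ℕ⁴) (v : ℝ⁴) :
    monomial a i v + monomial b i v = monomial (a + b) i v := by
  simp only [monomial]; ring

theorem abs_monomial (c : ℝ) (i : ℕ⁴) (v : ℝ⁴) : |monomial c i v| = monomial |c| i |v| := by
  simp [monomial, abs_mul, abs_pow]

theorem monomial_le_monomial {c : ℝ} (hc : 0 ≤ c) (i : ℕ⁴) {ρ σ : ℝ⁴} (hρ : 0 ≤ ρ)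
    (hρσ : ρ ≤ σ) : monomial c i ρ ≤ monomial c i σ := by
  have hσ := hρ.trans hρσ
  simp only [Prod.le_def, Prod.fst_zero, Prod.snd_zero] at hρ hσ hρσ
  obtain ⟨_, _, _, _⟩ := hρ
  obtain ⟨_, _, _, _⟩ := hσ
  obtain ⟨_, _, _, _⟩ := hρσ
  unfold monomial
  gcongr

theorem differentiable_monomial (c : ℝ) (i : ℕ⁴) : Differentiable ℝ (monomial c i) := by
  unfold monomial; fun_prop

theorem fderiv_monomial_apply (c : ℝ) (i : ℕ⁴) (y z : ℝ⁴) :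
    fderiv ℝ (monomial c i) y z =
      monomial (c * i.1) (i - (1, 0, 0, 0)) y * z.1
        + monomial (c * i.2.1) (i - (0, 1, 0, 0)) y * z.2.1
        + monomial (c * i.2.2.1) (i - (0, 0, 1, 0)) y * z.2.2.1
        + monomial (c * i.2.2.2) (i - (0, 0, 0, 1)) y * z.2.2.2 := by
  have hx := (hasFDerivAt_fst (𝕜 := ℝ) (p := y)).pow i.1
  have hy := (hasFDerivAt_snd (𝕜 := ℝ) (p := y)).fst.pow i.2.1
  have hz := (hasFDerivAt_snd (𝕜 := ℝ) (p := y)).snd.fst.pow i.2.2.1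
  have hw := (hasFDerivAt_snd (𝕜 := ℝ) (p := y)).snd.snd.pow i.2.2.2
  have h : HasFDerivAt (monomial c i) _ y :=
    (((((hasFDerivAt_const c y).mul hx).mul hy).mul hz).mul hw)
  rw [h.fderiv]
  simp [monomial]
  ring

theorem norm_fderiv_monomial_le {y σ : ℝ⁴} {C₁ C₂ C₃ C₄ : ℝ} (hy : |y| ≤ σ)
    (h₁ : ∀ n : ℕ, n * |y.1| ^ (n - 1) ≤ C₁ * σ.1 ^ n)
    (h₂ : ∀ n : ℕ, n * |y.2.1| ^ (n - 1) ≤ C₂ * σ.2.1 ^ n)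
    (h₃ : ∀ n : ℕ, n * |y.2.2.1| ^ (n - 1) ≤ C₃ * σ.2.2.1 ^ n)
    (h₄ : ∀ n : ℕ, n * |y.2.2.2| ^ (n - 1) ≤ C₄ * σ.2.2.2 ^ n) (c : ℝ) (i : ℕ⁴) :
    ‖fderiv ℝ (monomial c i) y‖ ≤ (C₁ + C₂ + C₃ + C₄) * monomial |c| i σ := by
  have hσ : 0 ≤ σ := (abs_nonneg y).trans hy
  simp only [Prod.le_def, Prod.fst_abs, Prod.snd_abs, Prod.fst_zero, Prod.snd_zero] at hy hσ
  obtain ⟨_, _, _, _⟩ := hy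
  obtain ⟨_, _, _, _⟩ := hσ
  obtain ⟨_, _, _, _⟩ : 0 ≤ C₁ ∧ 0 ≤ C₂ ∧ 0 ≤ C₃ ∧ 0 ≤ C₄ :=
    ⟨by simpa using h₁ 0, by simpa using h₂ 0, by simpa using h₃ 0, by simpa using h₄ 0⟩
  -- the facts in this block are found by `positivity` and `gcongr` below
  have := h₁ i.1
  have := h₂ i.2.1
  have := h₃ i.2.2.1
  have := h₄ i.2.2.2
  refine ContinuousLinearMap.opNorm_le_bound _ (by unfold monomial; positivity) fun z => ?_
  have hz₁ : ‖z.1‖ ≤ ‖z‖ := norm_fst_le z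
  have hz₂ : ‖z.2.1‖ ≤ ‖z‖ := (norm_fst_le z.2).trans (norm_snd_le z)
  have hz₃ : ‖z.2.2.1‖ ≤ ‖z‖ := ((norm_fst_le z.2.2).trans (norm_snd_le z.2)).trans (norm_snd_le z)
  have hz₄ : ‖z.2.2.2‖ ≤ ‖z‖ := ((norm_snd_le z.2.2).trans (norm_snd_le z.2)).trans (norm_snd_le z)
  rw [fderiv_monomial_apply]
  refine norm_add₄_le.trans ?_
  simp only [norm_mul, monomial, Prod.fst_sub, Prod.snd_sub, Nat.sub_zero, Real.norm_eq_abs,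
    abs_pow, Nat.abs_cast] at hz₁ hz₂ hz₃ hz₄ ⊢
  calc _ = |c| * (i.1 * |y.1| ^ (i.1 - 1)) * |y.2.1| ^ i.2.1 * |y.2.2.1| ^ i.2.2.1
          * |y.2.2.2| ^ i.2.2.2 * |z.1|
        + |c| * |y.1| ^ i.1 * (i.2.1 * |y.2.1| ^ (i.2.1 - 1)) * |y.2.2.1| ^ i.2.2.1
          * |y.2.2.2| ^ i.2.2.2 * |z.2.1|
        + |c| * |y.1| ^ i.1 * |y.2.1| ^ i.2.1 * (i.2.2.1 * |y.2.2.1| ^ (i.2.2.1 - 1))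
          * |y.2.2.2| ^ i.2.2.2 * |z.2.2.1|
        + |c| * |y.1| ^ i.1 * |y.2.1| ^ i.2.1 * |y.2.2.1| ^ i.2.2.1
          * (i.2.2.2 * |y.2.2.2| ^ (i.2.2.2 - 1)) * |z.2.2.2| := by ring
    _ ≤ |c| * (C₁ * σ.1 ^ i.1) * σ.2.1 ^ i.2.1 * σ.2.2.1 ^ i.2.2.1 * σ.2.2.2 ^ i.2.2.2 * ‖z‖
        + |c| * σ.1 ^ i.1 * (C₂ * σ.2.1 ^ i.2.1) * σ.2.2.1 ^ i.2.2.1 * σ.2.2.2 ^ i.2.2.2 * ‖z‖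
        + |c| * σ.1 ^ i.1 * σ.2.1 ^ i.2.1 * (C₃ * σ.2.2.1 ^ i.2.2.1) * σ.2.2.2 ^ i.2.2.2 * ‖z‖
        + |c| * σ.1 ^ i.1 * σ.2.1 ^ i.2.1 * σ.2.2.1 ^ i.2.2.1 * (C₄ * σ.2.2.2 ^ i.2.2.2) * ‖z‖ := by
      gcongr
    _ = _ := by ring

theorem abs_le_abs_add_of_norm_sub_le {y v : ℝ⁴} {r : ℝ} (h : ‖y - v‖ ≤ r) :
    |y| ≤ |v| + (r, r, r, r) := by
  simp only [norm_prod_le_iff, Prod.fst_sub, Prod.snd_sub, Real.norm_eq_abs] at h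
  simp only [Prod.le_def, Prod.fst_abs, Prod.snd_abs, Prod.fst_add, Prod.snd_add]
  refine ⟨?_, ?_, ?_, ?_⟩ <;> linarith [abs_sub_abs_le_abs_sub y.1 v.1,
    abs_sub_abs_le_abs_sub y.2.1 v.2.1, abs_sub_abs_le_abs_sub y.2.2.1 v.2.2.1,
    abs_sub_abs_le_abs_sub y.2.2.2 v.2.2.2]

theorem exists_mem_abs_eq_abs_add {D : Set ℝ⁴} {v : ℝ⁴} (hD : D ∈ 𝓝 v) :
    ∃ δ > 0, ∃ w ∈ D, |w| = |v| + (δ, δ, δ, δ) := by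
  obtain ⟨ε, hε, hball⟩ := Metric.mem_nhds_iff.1 hD
  have hδ : 0 ≤ ε / 2 := by positivity
  obtain ⟨w₁, hw₁, hw₁'⟩ := exists_abs_sub_le_abs_eq_abs_add v.1 hδ
  obtain ⟨w₂, hw₂, hw₂'⟩ := exists_abs_sub_le_abs_eq_abs_add v.2.1 hδ
  obtain ⟨w₃, hw₃, hw₃'⟩ := exists_abs_sub_le_abs_eq_abs_add v.2.2.1 hδ
  obtain ⟨w₄, hw₄, hw₄'⟩ := exists_abs_sub_le_abs_eq_abs_add v.2.2.2 hδ
  refine ⟨ε / 2, by positivity, (w₁, w₂, w₃, w₄), hball ?_, ?_⟩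
  · rw [Metric.mem_ball, dist_eq_norm]
    refine lt_of_le_of_lt ?_ (half_lt_self hε)
    simp only [norm_prod_le_iff, Prod.fst_sub, Prod.snd_sub, Real.norm_eq_abs]
    exact ⟨hw₁, hw₂, hw₃, hw₄⟩
  · simp only [Prod.ext_iff, Prod.fst_abs, Prod.snd_abs, Prod.fst_add, Prod.snd_add]
    exact ⟨hw₁', hw₂', hw₃', hw₄'⟩

theorem hasFDerivAt_series {c : ℕ⁴ → ℝ} {v : ℝ⁴} {δ : ℝ} (hδ : 0 < δ)
    (hc : Summable fun i => monomial |c i| i (|v| + (δ, δ, δ, δ))) :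
    Summable (fun i => fderiv ℝ (monomial (c i) i) v) ∧
      HasFDerivAt (series c) (∑' i, fderiv ℝ (monomial (c i) i) v) v := by
  set σ : ℝ⁴ := |v| + (δ, δ, δ, δ)
  have hv : v ∈ Metric.ball v (δ / 2) := Metric.mem_ball_self (by positivity)
  have hball : ∀ y ∈ Metric.ball v (δ / 2), |y| ≤ |v| + (δ / 2, δ / 2, δ / 2, δ / 2) :=
    fun y hy => abs_le_abs_add_of_norm_sub_le (dist_eq_norm y v ▸ (Metric.mem_ball.1 hy).le)
  have hρσ : |v| + (δ / 2, δ / 2, δ / 2, δ / 2) ≤ σ := by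
    simp only [σ, Prod.le_def, Prod.fst_add, Prod.snd_add]; refine ⟨?_, ?_, ?_, ?_⟩ <;> linarith
  obtain ⟨C₁, hC₁⟩ := exists_nat_mul_pow_pred_le (ρ := |v.1| + δ / 2) (σ := |v.1| + δ)
    (by positivity) (by linarith)
  obtain ⟨C₂, hC₂⟩ := exists_nat_mul_pow_pred_le (ρ := |v.2.1| + δ / 2) (σ := |v.2.1| + δ)
    (by positivity) (by linarith)
  obtain ⟨C₃, hC₃⟩ := exists_nat_mul_pow_pred_le (ρ := |v.2.2.1| + δ / 2) (σ := |v.2.2.1| + δ)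
    (by positivity) (by linarith)
  obtain ⟨C₄, hC₄⟩ := exists_nat_mul_pow_pred_le (ρ := |v.2.2.2| + δ / 2) (σ := |v.2.2.2| + δ)
    (by positivity) (by linarith)
  have hbound : ∀ i, ∀ y ∈ Metric.ball v (δ / 2),
      ‖fderiv ℝ (monomial (c i) i) y‖ ≤ (C₁ + C₂ + C₃ + C₄) * monomial |c i| i σ := by
    intro i y hy
    have hyρ := hball y hy
    simp only [Prod.le_def, Prod.fst_abs, Prod.snd_abs, Prod.fst_add, Prod.snd_add] at hyρ
    exact norm_fderiv_monomial_le ((hball y hy).trans hρσ) (hC₁ _ hyρ.1) (hC₂ _ hyρ.2.1)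
      (hC₃ _ hyρ.2.2.1) (hC₄ _ hyρ.2.2.2) (c i) i
  have hf₀ : Summable fun i => monomial (c i) i v := by
    refine hc.of_norm_bounded fun i => ?_
    rw [Real.norm_eq_abs, abs_monomial]
    refine monomial_le_monomial (abs_nonneg _) i (abs_nonneg v) (le_add_of_nonneg_right ?_)
    simp only [Prod.le_def, Prod.fst_zero, Prod.snd_zero]; refine ⟨?_, ?_, ?_, ?_⟩ <;> positivity
  have hu := hc.mul_left (C₁ + C₂ + C₃ + C₄)
  refine ⟨hu.of_norm_bounded fun i => hbound i v hv, ?_⟩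
  exact hasFDerivAt_tsum_of_isPreconnected hu Metric.isOpen_ball
    (convex_ball v _).isPreconnected
    (fun i y _ => (differentiable_monomial (c i) i).differentiableAt.hasFDerivAt) hbound hv hf₀ hv

theorem HasSum.partialDeriv_x {c : ℕ⁴ → ℝ} {v : ℝ⁴} {L : ℝ⁴ →L[ℝ] ℝ}
    (h : HasSum (fun i => fderiv ℝ (monomial (c i) i) v) L) :
    HasSum (fun j => monomial (c (j + (0, 1, 0, 0)) * (j.2.1 + 1)) j v) (L (0, 1, 0, 0)) := by
  have h' := h.mapL (ContinuousLinearMap.apply ℝ ℝ ((0, 1, 0, 0) : ℝ⁴))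
  simp only [ContinuousLinearMap.apply_apply, fderiv_monomial_apply, mul_zero, mul_one, add_zero,
    zero_add] at h'
  rw [← hasSum_comp_add_right_iff ((0, 1, 0, 0) : ℕ⁴)] at h'
  · simpa using h'
  · intro i hi
    simp_all [Prod.le_def, Nat.one_le_iff_ne_zero, monomial]

theorem HasSum.partialDeriv_y {c : ℕ⁴ → ℝ} {v : ℝ⁴} {L : ℝ⁴ →L[ℝ] ℝ}
    (h : HasSum (fun i => fderiv ℝ (monomial (c i) i) v) L) :
    HasSum (fun j => monomial (c (j + (0, 0, 1, 0)) * (j.2.2.1 + 1)) j v) (L (0, 0, 1, 0)) := by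
  have h' := h.mapL (ContinuousLinearMap.apply ℝ ℝ ((0, 0, 1, 0) : ℝ⁴))
  simp only [ContinuousLinearMap.apply_apply, fderiv_monomial_apply, mul_zero, mul_one, add_zero,
    zero_add] at h'
  rw [← hasSum_comp_add_right_iff ((0, 0, 1, 0) : ℕ⁴)] at h'
  · simpa using h'
  · intro i hi
    simp_all [Prod.le_def, Nat.one_le_iff_ne_zero, monomial]

theorem HasSum.partialDeriv_z {c : ℕ⁴ → ℝ} {v : ℝ⁴} {L : ℝ⁴ →L[ℝ] ℝ}
    (h : HasSum (fun i => fderiv ℝ (monomial (c i) i) v) L) :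
    HasSum (fun j => monomial (c (j + (0, 0, 0, 1)) * (j.2.2.2 + 1)) j v) (L (0, 0, 0, 1)) := by
  have h' := h.mapL (ContinuousLinearMap.apply ℝ ℝ ((0, 0, 0, 1) : ℝ⁴))
  simp only [ContinuousLinearMap.apply_apply, fderiv_monomial_apply, mul_zero, mul_one, add_zero,
    zero_add] at h'
  rw [← hasSum_comp_add_right_iff ((0, 0, 0, 1) : ℕ⁴)] at h'
  · simpa using h'
  · intro i hi
    simp_all [Prod.le_def, Nat.one_le_iff_ne_zero, monomial]

end FourVarSeries

open FourVarSeries in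
theorem stmt_18 (u1 u0 u2 : ℕ → ℕ → ℕ → ℕ → ℝ)
    (hrec : ∀ ω p q r : ℕ,
      u0 ω p (q + 1) r = -(((p : ℝ) + 1) / ((q : ℝ) + 1)) * u1 ω (p + 1) q r
        - (((r : ℝ) + 1) / ((q : ℝ) + 1)) * u2 ω p q (r + 1))
    (D : Set (ℝ × ℝ × ℝ × ℝ)) (hD : IsOpen D)
    (hconv : ∀ v ∈ D, ∀ w : ℕ → ℕ → ℕ → ℕ → ℝ, (w = u1 ∨ w = u0 ∨ w = u2) →
      Summable (fun i : ℕ × ℕ × ℕ × ℕ =>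
        |w i.1 i.2.1 i.2.2.1 i.2.2.2| * |v.1| ^ i.1 * |v.2.1| ^ i.2.1
          * |v.2.2.1| ^ i.2.2.1 * |v.2.2.2| ^ i.2.2.2))
    (U1 U0 U2 : ℝ × ℝ × ℝ × ℝ → ℝ)
    (hU1 : U1 = fun v => ∑' i : ℕ × ℕ × ℕ × ℕ,
      u1 i.1 i.2.1 i.2.2.1 i.2.2.2 * v.1 ^ i.1 * v.2.1 ^ i.2.1
        * v.2.2.1 ^ i.2.2.1 * v.2.2.2 ^ i.2.2.2)
    (hU0 : U0 = fun v => ∑' i : ℕ × ℕ × ℕ × ℕ,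
      u0 i.1 i.2.1 i.2.2.1 i.2.2.2 * v.1 ^ i.1 * v.2.1 ^ i.2.1
        * v.2.2.1 ^ i.2.2.1 * v.2.2.2 ^ i.2.2.2)
    (hU2 : U2 = fun v => ∑' i : ℕ × ℕ × ℕ × ℕ,
      u2 i.1 i.2.1 i.2.2.1 i.2.2.2 * v.1 ^ i.1 * v.2.1 ^ i.2.1
        * v.2.2.1 ^ i.2.2.1 * v.2.2.2 ^ i.2.2.2) :
    ∀ v ∈ D,
      DifferentiableAt ℝ U1 v ∧ DifferentiableAt ℝ U0 v ∧ DifferentiableAt ℝ U2 v ∧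
      fderiv ℝ U1 v (0, 1, 0, 0) + fderiv ℝ U0 v (0, 0, 1, 0)
        + fderiv ℝ U2 v (0, 0, 0, 1) = 0 := by
  intro v hv
  obtain ⟨δ, hδ, w, hwD, hw⟩ := exists_mem_abs_eq_abs_add (hD.mem_nhds hv)
  have hdiff := fun (a : ℕ → ℕ → ℕ → ℕ → ℝ) (ha : a = u1 ∨ a = u0 ∨ a = u2) =>
    hasFDerivAt_series (c := fun i => a i.1 i.2.1 i.2.2.1 i.2.2.2) hδ
      (by rw [← hw]; exact hconv w hwD a ha)
  obtain ⟨hs₁, hd₁⟩ := hdiff u1 (Or.inl rfl)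
  obtain ⟨hs₀, hd₀⟩ := hdiff u0 (Or.inr (Or.inl rfl))
  obtain ⟨hs₂, hd₂⟩ := hdiff u2 (Or.inr (Or.inr rfl))
  replace hU1 : U1 = series fun i => u1 i.1 i.2.1 i.2.2.1 i.2.2.2 := hU1
  replace hU0 : U0 = series fun i => u0 i.1 i.2.1 i.2.2.1 i.2.2.2 := hU0
  replace hU2 : U2 = series fun i => u2 i.1 i.2.1 i.2.2.1 i.2.2.2 := hU2
  subst hU1 hU0 hU2
  refine ⟨hd₁.differentiableAt, hd₀.differentiableAt, hd₂.differentiableAt, ?_⟩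
  rw [hd₁.fderiv, hd₀.fderiv, hd₂.fderiv]
  have hsum := (hs₁.hasSum.partialDeriv_x.add hs₀.hasSum.partialDeriv_y).add
    hs₂.hasSum.partialDeriv_z
  refine hsum.unique ?_
  convert hasSum_zero with ⟨ω, p, q, r⟩
  have hcoeff : u1 ω (p + 1) q r * ((p : ℝ) + 1) + u0 ω p (q + 1) r * ((q : ℝ) + 1)
      + u2 ω p q (r + 1) * ((r : ℝ) + 1) = 0 := by
    rw [hrec]
    field_simp
    ring
  simp only [monomial_add, Prod.mk_add_mk, add_zero, hcoeff]
  simp [monomial]
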